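/- arXiv:1606.04874 — 6 statements merged into one kernel-verified Lean document; each statement's English description precedes it below -/
import Mathlib

section
/- For every character χ on A⋈B, either χ=(φ,0) for some character φ on A, or χ=(φ,ψ) where ψ is a character on B, φ∈Δ(A)∪{0}, and a·ψ=ψ·a=φ(a)ψ for all a∈A. Conversely, every such pair is a character on A⋈B. That is, Δ(A⋈B)=E∪F where E={(φ,0): φ∈Δ(A)} and F={(φ,ψ): φ∈Δ(A)∪{0}, ψ∈Δ(B), ψ(a·b)=ψ(b·a)=φ(a)ψ(b) for all a∈A, b∈B}. -/
open ContinuousLinearMap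

/-- `B` is an algebraic Banach `A`-bimodule: a Banach `A`-bimodule with contractive
actions satisfying the compatibility conditions with the multiplication of `B`. -/
structure AlgBimod (A B : Type*) [NonUnitalNormedRing A] [NormedSpace ℂ A]
    [NonUnitalNormedRing B] [NormedSpace ℂ B] where
  l : A →L[ℂ] B →L[ℂ] B
  r : B →L[ℂ] A →L[ℂ] B
  norm_l : ∀ (a : A) (b : B), ‖l a b‖ ≤ ‖a‖ * ‖b‖
  norm_r : ∀ (b : B) (a : A), ‖r b a‖ ≤ ‖a‖ * ‖b‖
  mul_act : ∀ (a₁ a₂ : A) (b : B), l (a₁ * a₂) b = l a₁ (l a₂ b)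
  act_mul : ∀ (b : B) (a₁ a₂ : A), r b (a₁ * a₂) = r (r b a₁) a₂
  act_act : ∀ (a₁ : A) (b : B) (a₂ : A), r (l a₁ b) a₂ = l a₁ (r b a₂)
  compat₁ : ∀ (a : A) (b₁ b₂ : B), l a (b₁ * b₂) = (l a b₁) * b₂
  compat₂ : ∀ (b₁ b₂ : B) (a : A), r (b₁ * b₂) a = b₁ * (r b₂ a)
  compat₃ : ∀ (b₁ : B) (a : A) (b₂ : B), (r b₁ a) * b₂ = b₁ * (l a b₂)

/-- The multiplication of the product algebra `A ⋈ B`. -/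
noncomputable def AlgBimod.bmul {A B : Type*} [NonUnitalNormedRing A] [NormedSpace ℂ A]
    [NonUnitalNormedRing B] [NormedSpace ℂ B] (M : AlgBimod A B) (p q : A × B) : A × B :=
  (p.1 * q.1, M.l p.1 q.2 + M.r p.2 q.1 + p.2 * q.2)

/-- the Gelfand space of `A ⋈ B`.  A pair `(φ, ψ)` of continuous linear
functionals, acting on `A ⋈ B` by `(a,b) ↦ φ(a) + ψ(b)`, is a character of `A ⋈ B`
iff either `ψ = 0` and `φ ∈ Δ(A)`, or `ψ ∈ Δ(B)`, `φ ∈ Δ(A) ∪ {0}`, and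
`ψ(a·b) = ψ(b·a) = φ(a)ψ(b)` for all `a, b`.  That is, `Δ(A ⋈ B) = E ∪ F`. -/
theorem stmt12 {A B : Type*} [NonUnitalNormedRing A] [NormedSpace ℂ A] [CompleteSpace A]
    [NonUnitalNormedRing B] [NormedSpace ℂ B] [CompleteSpace B] (M : AlgBimod A B)
    (φ : A →L[ℂ] ℂ) (ψ : B →L[ℂ] ℂ) :
    (¬(φ = 0 ∧ ψ = 0) ∧
        ∀ p q : A × B,
          φ (M.bmul p q).1 + ψ (M.bmul p q).2 = (φ p.1 + ψ p.2) * (φ q.1 + ψ q.2)) ↔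
      ((ψ = 0 ∧ φ ≠ 0 ∧ ∀ a₁ a₂ : A, φ (a₁ * a₂) = φ a₁ * φ a₂) ∨
        ((ψ ≠ 0 ∧ ∀ b₁ b₂ : B, ψ (b₁ * b₂) = ψ b₁ * ψ b₂) ∧
          ((φ ≠ 0 ∧ ∀ a₁ a₂ : A, φ (a₁ * a₂) = φ a₁ * φ a₂) ∨ φ = 0) ∧
          (∀ (a : A) (b : B), ψ (M.l a b) = φ a * ψ b ∧ ψ (M.r b a) = φ a * ψ b))) := by
  constructor
  · rintro ⟨hne, h⟩
    have hφ : ∀ a₁ a₂ : A, φ (a₁ * a₂) = φ a₁ * φ a₂ := by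
      intro a₁ a₂; have := h (a₁, 0) (a₂, 0); simpa [AlgBimod.bmul] using this
    have hψm : ∀ b₁ b₂ : B, ψ (b₁ * b₂) = ψ b₁ * ψ b₂ := by
      intro b₁ b₂; have := h (0, b₁) (0, b₂); simpa [AlgBimod.bmul] using this
    have hl : ∀ (a : A) (b : B), ψ (M.l a b) = φ a * ψ b := by
      intro a b; have := h (a, 0) (0, b); simpa [AlgBimod.bmul] using this
    have hr : ∀ (a : A) (b : B), ψ (M.r b a) = φ a * ψ b := by
      intro a b; have := h (0, b) (a, 0); simpa [AlgBimod.bmul, mul_comm] using this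
    by_cases hψ0 : ψ = 0
    · exact Or.inl ⟨hψ0, fun h0 => hne ⟨h0, hψ0⟩, hφ⟩
    · refine Or.inr ⟨⟨hψ0, hψm⟩, ?_, fun a b => ⟨hl a b, hr a b⟩⟩
      by_cases hφ0 : φ = 0
      · exact Or.inr hφ0
      · exact Or.inl ⟨hφ0, hφ⟩
  · rintro (⟨hψ0, hφ0, hφ⟩ | ⟨⟨hψ0, hψm⟩, hφcase, hlr⟩)
    · subst hψ0
      refine ⟨fun h0 => hφ0 h0.1, fun p q => ?_⟩
      simp [AlgBimod.bmul, hφ]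
    · refine ⟨fun h0 => hψ0 h0.2, fun p q => ?_⟩
      obtain ⟨a₁, b₁⟩ := p; obtain ⟨a₂, b₂⟩ := q
      have hφm : φ (a₁ * a₂) = φ a₁ * φ a₂ := by
        rcases hφcase with ⟨_, hφ⟩ | h0
        · exact hφ _ _
        · simp [h0]
      simp only [AlgBimod.bmul, map_add, hψm, (hlr a₁ b₂).1, (hlr a₂ b₁).2, hφm]
      ring
end

section
/- Let A and B be commutative Banach algebras and let B be a symmetric algebraic Banach A-bimodule. Then A⋈B is semisimple if and only if both A and B are semisimple. -/
open ContinuousLinearMap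

/-- for commutative `A`, `B` and a symmetric algebraic Banach
`A`-bimodule `B`, the algebra `A ⋈ B` is semisimple iff both `A` and `B` are
semisimple, where semisimplicity of a commutative Banach algebra means that the
intersection of the kernels of its characters is zero. -/
theorem stmt14 {A B : Type*} [NonUnitalNormedRing A] [NormedSpace ℂ A] [CompleteSpace A]
    [NonUnitalNormedRing B] [NormedSpace ℂ B] [CompleteSpace B] (M : AlgBimod A B)
    (hA : ∀ a₁ a₂ : A, a₁ * a₂ = a₂ * a₁) (hB : ∀ b₁ b₂ : B, b₁ * b₂ = b₂ * b₁)
    (hsym : ∀ (a : A) (b : B), M.l a b = M.r b a) :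
    (∀ p : A × B,
        (∀ (φ : A →L[ℂ] ℂ) (ψ : B →L[ℂ] ℂ),
          (¬(φ = 0 ∧ ψ = 0) ∧
            ∀ p₁ p₂ : A × B,
              φ (M.bmul p₁ p₂).1 + ψ (M.bmul p₁ p₂).2 =
                (φ p₁.1 + ψ p₁.2) * (φ p₂.1 + ψ p₂.2)) →
          φ p.1 + ψ p.2 = 0) → p = 0) ↔
      ((∀ a : A,
          (∀ φ : A →L[ℂ] ℂ,
            (φ ≠ 0 ∧ ∀ a₁ a₂ : A, φ (a₁ * a₂) = φ a₁ * φ a₂) → φ a = 0) → a = 0) ∧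
        (∀ b : B,
          (∀ ψ : B →L[ℂ] ℂ,
            (ψ ≠ 0 ∧ ∀ b₁ b₂ : B, ψ (b₁ * b₂) = ψ b₁ * ψ b₂) → ψ b = 0) → b = 0)) := by
  constructor
  · intro h
    constructor
    · intro a ha
      have h0 := h (a, 0) ?_
      · exact (Prod.mk.injEq _ _ _ _ ▸ h0).1
      · rintro φ ψ ⟨hne, hmul⟩
        simp only [map_zero, add_zero]
        by_cases hφ : φ = 0
        · simp [hφ]
        · refine ha φ ⟨hφ, fun a₁ a₂ => ?_⟩
          have := hmul (a₁, 0) (a₂, 0)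
          simpa [AlgBimod.bmul] using this
    · intro b hb
      have h0 := h (0, b) ?_
      · exact (Prod.mk.injEq _ _ _ _ ▸ h0).2
      · rintro φ ψ ⟨hne, hmul⟩
        simp only [map_zero, zero_add]
        by_cases hψ : ψ = 0
        · simp [hψ]
        · refine hb ψ ⟨hψ, fun b₁ b₂ => ?_⟩
          have := hmul ((0 : A), b₁) ((0 : A), b₂)
          simpa [AlgBimod.bmul] using this
  · rintro ⟨hAs, hBs⟩ p hp
    have ha : p.1 = 0 := by
      refine hAs p.1 (fun φ ⟨hφ, hm⟩ => ?_)
      have := hp φ 0 ⟨by simp [hφ], fun p₁ p₂ => by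
        simpa [AlgBimod.bmul] using hm p₁.1 p₂.1⟩
      simpa using this
    have hb : p.2 = 0 := by
      refine hBs p.2 (fun ψ ⟨hψ, hm⟩ => ?_)
      obtain ⟨b₀, hb₀⟩ : ∃ b₀, ψ b₀ ≠ 0 := by
        by_contra hcon
        push_neg at hcon
        exact hψ (ContinuousLinearMap.ext fun x => by simpa using hcon x)
      set φ : A →L[ℂ] ℂ := (ψ b₀)⁻¹ • (ψ.comp (M.l.flip b₀)) with hφdef
      have hφa : ∀ a : A, φ a = (ψ b₀)⁻¹ * ψ (M.l a b₀) := fun a => rfl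
      have hkey : ∀ (a : A) (b : B), ψ (M.l a b) = φ a * ψ b := by
        intro a b
        have h1 : ψ (M.l a b) * ψ b₀ = ψ (M.l a b₀) * ψ b := by
          calc ψ (M.l a b) * ψ b₀ = ψ ((M.l a b) * b₀) := (hm _ _).symm
            _ = ψ (M.l a (b * b₀)) := by rw [M.compat₁]
            _ = ψ (M.l a (b₀ * b)) := by rw [hB]
            _ = ψ ((M.l a b₀) * b) := by rw [M.compat₁]
            _ = ψ (M.l a b₀) * ψ b := hm _ _
        rw [hφa]
        field_simp
        linear_combination h1
      have hφmul : ∀ a₁ a₂ : A, φ (a₁ * a₂) = φ a₁ * φ a₂ := by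
        intro a₁ a₂
        have h2 : ψ (M.l (a₁ * a₂) b₀) = φ a₁ * (φ a₂ * ψ b₀) := by
          rw [M.mul_act, hkey, hkey]
        rw [hφa]
        field_simp
        linear_combination h2
      have hkey' : ∀ (b : B) (a : A), ψ (M.r b a) = φ a * ψ b := by
        intro b a
        rw [← hsym]
        exact hkey a b
      have := hp φ ψ ⟨fun hc => hψ hc.2, fun p₁ p₂ => by
        simp only [AlgBimod.bmul, map_add, hkey, hkey', hm, hφmul]
        ring⟩
      rw [ha, map_zero, zero_add] at this
      exact this
    calc p = (p.1, p.2) := rfl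
      _ = 0 := by rw [ha, hb]; rfl
end

section
/- Equipping A**, B**, and (A⋈B)** with their first Arens products, there is an isometric algebra isomorphism (A⋈B)** ≅ A**⋈B**. -/
set_option synthInstance.maxHeartbeats 2000000
set_option maxSynthPendingDepth 4
set_option maxHeartbeats 2000000

open ContinuousLinearMap

open ContinuousLinearMap in
/-- The adjoint of a continuous bilinear map `m : X →L Y →L Z`, namely the bilinear map
`Z* →L X →L Y*` given by `(adj m f x) y = f (m x y)`.  Iterating it three times gives
the (first) Arens extension of `m` to the biduals. -/
noncomputable def adjB {X Y Z : Type*} [NormedAddCommGroup X] [NormedSpace ℂ X]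
    [NormedAddCommGroup Y] [NormedSpace ℂ Y] [NormedAddCommGroup Z] [NormedSpace ℂ Z]
    (m : X →L[ℂ] Y →L[ℂ] Z) : (Z →L[ℂ] ℂ) →L[ℂ] X →L[ℂ] (Y →L[ℂ] ℂ) :=
  ((compL ℂ X (Y →L[ℂ] Z) (Y →L[ℂ] ℂ)).flip m).comp (compL ℂ Y Z ℂ)

/-- The first Arens extension of a continuous bilinear map `m : X →L Y →L Z` to the
biduals, `X** →L Y** →L Z**`; it is the triple adjoint of `m`.  For `m` the
multiplication of a Banach algebra this is the first Arens product. -/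
noncomputable def arens {X Y Z : Type*} [NormedAddCommGroup X] [NormedSpace ℂ X]
    [NormedAddCommGroup Y] [NormedSpace ℂ Y] [NormedAddCommGroup Z] [NormedSpace ℂ Z]
    (m : X →L[ℂ] Y →L[ℂ] Z) :
    ((X →L[ℂ] ℂ) →L[ℂ] ℂ) →L[ℂ] ((Y →L[ℂ] ℂ) →L[ℂ] ℂ) →L[ℂ] ((Z →L[ℂ] ℂ) →L[ℂ] ℂ) :=
  adjB (adjB (adjB m))

/-- The weak-* topology on the bidual `X**`, i.e. the topology induced by the
evaluation maps at elements of `X*`. -/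
noncomputable def wstarTop (X : Type*) [NormedAddCommGroup X] [NormedSpace ℂ X] :
    TopologicalSpace ((X →L[ℂ] ℂ) →L[ℂ] ℂ) :=
  TopologicalSpace.induced (fun F => (fun f => F f : (X →L[ℂ] ℂ) → ℂ)) inferInstance

section S16
variable (A B : Type*) [NonUnitalNormedRing A] [NormedSpace ℂ A]
  [NonUnitalNormedRing B] [NormedSpace ℂ B]

noncomputable def s16piA : WithLp 1 (A × B) →L[ℂ] A :=
  (fst ℂ A B).comp (WithLp.prodContinuousLinearEquiv 1 ℂ A B).toContinuousLinearMap
noncomputable def s16piB : WithLp 1 (A × B) →L[ℂ] B :=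
  (snd ℂ A B).comp (WithLp.prodContinuousLinearEquiv 1 ℂ A B).toContinuousLinearMap
noncomputable def s16iA : A →L[ℂ] WithLp 1 (A × B) :=
  (WithLp.prodContinuousLinearEquiv 1 ℂ A B).symm.toContinuousLinearMap.comp (inl ℂ A B)
noncomputable def s16iB : B →L[ℂ] WithLp 1 (A × B) :=
  (WithLp.prodContinuousLinearEquiv 1 ℂ A B).symm.toContinuousLinearMap.comp (inr ℂ A B)

noncomputable def s16dA : (A →L[ℂ] ℂ) →L[ℂ] (WithLp 1 (A × B) →L[ℂ] ℂ) :=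
  (compL ℂ (WithLp 1 (A × B)) A ℂ).flip (s16piA A B)
noncomputable def s16dB : (B →L[ℂ] ℂ) →L[ℂ] (WithLp 1 (A × B) →L[ℂ] ℂ) :=
  (compL ℂ (WithLp 1 (A × B)) B ℂ).flip (s16piB A B)
noncomputable def s16eA : (WithLp 1 (A × B) →L[ℂ] ℂ) →L[ℂ] (A →L[ℂ] ℂ) :=
  (compL ℂ A (WithLp 1 (A × B)) ℂ).flip (s16iA A B)
noncomputable def s16eB : (WithLp 1 (A × B) →L[ℂ] ℂ) →L[ℂ] (B →L[ℂ] ℂ) :=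
  (compL ℂ B (WithLp 1 (A × B)) ℂ).flip (s16iB A B)

variable {A B}

lemma s16_norm_x (x : WithLp 1 (A × B)) : ‖x‖ = ‖s16piA A B x‖ + ‖s16piB A B x‖ := by
  rw [WithLp.prod_norm_eq_of_nat 1 (by norm_cast) x]
  simp
  rfl

lemma s16_norm_iA (a : A) : ‖s16iA A B a‖ = ‖a‖ :=
  WithLp.norm_toLp_fst 1 A B a

lemma s16_norm_iB (b : B) : ‖s16iB A B b‖ = ‖b‖ :=
  WithLp.norm_toLp_snd 1 A B b

lemma s16_eAdA (f : A →L[ℂ] ℂ) : s16eA A B (s16dA A B f) = f :=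
  ContinuousLinearMap.ext fun _ => rfl

lemma s16_eBdB (g : B →L[ℂ] ℂ) : s16eB A B (s16dB A B g) = g :=
  ContinuousLinearMap.ext fun _ => rfl

lemma s16_eBdA (f : A →L[ℂ] ℂ) : s16eB A B (s16dA A B f) = 0 :=
  ContinuousLinearMap.ext fun b => by
    show f (s16piA A B (s16iB A B b)) = 0
    have : s16piA A B (s16iB A B b) = 0 := rfl
    rw [this, map_zero]

lemma s16_eAdB (g : B →L[ℂ] ℂ) : s16eA A B (s16dB A B g) = 0 :=
  ContinuousLinearMap.ext fun a => by
    show g (s16piB A B (s16iA A B a)) = 0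
    have : s16piB A B (s16iA A B a) = 0 := rfl
    rw [this, map_zero]

lemma s16_recon (h : WithLp 1 (A × B) →L[ℂ] ℂ) :
    s16dA A B (s16eA A B h) + s16dB A B (s16eB A B h) = h := by
  ext x
  show h (s16iA A B (s16piA A B x)) + h (s16iB A B (s16piB A B x)) = h x
  rw [← map_add]
  congr 1
  show (WithLp.equiv 1 (A × B)).symm (s16piA A B x, 0)
      + (WithLp.equiv 1 (A × B)).symm (0, s16piB A B x) = x
  change (WithLp.equiv 1 (A × B)).symm ((s16piA A B x, (0 : B)) + ((0 : A), s16piB A B x)) = x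
  have : ((s16piA A B x, (0 : B)) + ((0 : A), s16piB A B x)) = WithLp.equiv 1 (A × B) x := by
    ext <;> simp <;> rfl
  rw [this, Equiv.symm_apply_apply]

end S16

lemma s16_exists_near {E : Type*} [NormedAddCommGroup E] [NormedSpace ℂ E]
    (Φ : E →L[ℂ] ℂ) {ε : ℝ} (hε : 0 < ε) : ∃ x : E, ‖x‖ ≤ 1 ∧ ‖Φ‖ - ε ≤ ‖Φ x‖ := by
  by_contra hcon
  push_neg at hcon
  have h0 : 0 ≤ ‖Φ‖ - ε := le_of_lt (lt_of_le_of_lt (norm_nonneg _) (hcon 0 (by simp)))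
  have : ‖Φ‖ ≤ ‖Φ‖ - ε := by
    refine Φ.opNorm_le_bound h0 fun x => ?_
    rcases eq_or_ne x 0 with rfl | hx
    · simp [h0]
    · have hxn : (0:ℝ) < ‖x‖ := norm_pos_iff.mpr hx
      have hu : ‖((‖x‖ : ℂ))⁻¹ • x‖ ≤ 1 := by
        rw [norm_smul, norm_inv, Complex.norm_real, Real.norm_of_nonneg hxn.le,
          inv_mul_cancel₀ hxn.ne']
      have := (hcon _ hu).le
      rw [map_smul, norm_smul, norm_inv, Complex.norm_real,
        Real.norm_of_nonneg hxn.le] at this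
      calc ‖Φ x‖ = ‖x‖ * (‖x‖⁻¹ * ‖Φ x‖) := by field_simp
      _ ≤ ‖x‖ * (‖Φ‖ - ε) := by exact mul_le_mul_of_nonneg_left this hxn.le
      _ = (‖Φ‖ - ε) * ‖x‖ := mul_comm _ _
  linarith

lemma s16_phase (z : ℂ) : ∃ α : ℂ, ‖α‖ = 1 ∧ α * z = (‖z‖ : ℂ) := by
  rcases eq_or_ne z 0 with rfl | hz
  · exact ⟨1, by simp, by simp⟩
  · refine ⟨(‖z‖ : ℂ) / z, ?_, by field_simp⟩
    rw [norm_div, Complex.norm_real, Real.norm_of_nonneg (norm_nonneg z),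
      div_self (norm_ne_zero_iff.mpr hz)]

/-- equipping `A**`, `B**` and `(A ⋈ B)**` with their first Arens
products, `(A ⋈ B)** ≅ A** ⋈ B**` isometrically and isomorphically.  Here `A ⋈ B` is
realized as `WithLp 1 (A × B)` (the ℓ¹-norm), `mAB` is its multiplication as a
continuous bilinear map, and the multiplication of `A** ⋈ B**` is built from the first
Arens products of `A`, `B` and the Arens extensions of the module actions. -/
theorem stmt16 {A B : Type*} [NonUnitalNormedRing A] [NormedSpace ℂ A] [CompleteSpace A]
    [IsScalarTower ℂ A A] [SMulCommClass ℂ A A]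
    [NonUnitalNormedRing B] [NormedSpace ℂ B] [CompleteSpace B]
    [IsScalarTower ℂ B B] [SMulCommClass ℂ B B] (M : AlgBimod A B)
    (mAB : WithLp 1 (A × B) →L[ℂ] WithLp 1 (A × B) →L[ℂ] WithLp 1 (A × B))
    (hm : ∀ p q : A × B,
      mAB ((WithLp.equiv 1 (A × B)).symm p) ((WithLp.equiv 1 (A × B)).symm q) =
        (WithLp.equiv 1 (A × B)).symm (M.bmul p q)) :
    ∃ e : ((WithLp 1 (A × B) →L[ℂ] ℂ) →L[ℂ] ℂ) ≃ₗ[ℂ]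
        (((A →L[ℂ] ℂ) →L[ℂ] ℂ) × ((B →L[ℂ] ℂ) →L[ℂ] ℂ)),
      (∀ F : (WithLp 1 (A × B) →L[ℂ] ℂ) →L[ℂ] ℂ, ‖F‖ = ‖(e F).1‖ + ‖(e F).2‖) ∧
      (∀ F G : (WithLp 1 (A × B) →L[ℂ] ℂ) →L[ℂ] ℂ,
        e (arens mAB F G) =
          (arens (ContinuousLinearMap.mul ℂ A) (e F).1 (e G).1,
            arens M.l (e F).1 (e G).2 + arens M.r (e F).2 (e G).1 +
              arens (ContinuousLinearMap.mul ℂ B) (e F).2 (e G).2)) := by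
  refine ⟨{ toFun := fun F => (F.comp (s16dA A B), F.comp (s16dB A B)),
            map_add' := fun F G => by
              simp [ContinuousLinearMap.add_comp, Prod.ext_iff],
            map_smul' := fun c F => by
              simp [ContinuousLinearMap.smul_comp, Prod.ext_iff],
            invFun := fun P => P.1.comp (s16eA A B) + P.2.comp (s16eB A B),
            left_inv := fun F => by
              ext h
              show F (s16dA A B (s16eA A B h)) + F (s16dB A B (s16eB A B h)) = F h
              rw [← map_add, s16_recon],
            right_inv := fun P => by
              refine Prod.ext ?_ ?_
              · ext f
                show P.1 (s16eA A B (s16dA A B f)) + P.2 (s16eB A B (s16dA A B f)) = P.1 f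
                rw [s16_eAdA, s16_eBdA, map_zero, add_zero]
              · ext g
                show P.1 (s16eA A B (s16dB A B g)) + P.2 (s16eB A B (s16dB A B g)) = P.2 g
                rw [s16_eAdB, s16_eBdB, map_zero, zero_add] }, ?_, ?_⟩
  · -- the isometry statement
    intro F
    show ‖F‖ = ‖F.comp (s16dA A B)‖ + ‖F.comp (s16dB A B)‖
    set Φ := F.comp (s16dA A B) with hΦ
    set Ψ := F.comp (s16dB A B) with hΨ
    apply le_antisymm
    · refine F.opNorm_le_bound (by positivity) fun h => ?_
      have h1 : F h = Φ (s16eA A B h) + Ψ (s16eB A B h) := by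
        conv_lhs => rw [← s16_recon h]
        rw [map_add]; rfl
      have heA : ‖s16eA A B h‖ ≤ ‖h‖ := by
        refine opNorm_le_bound _ (norm_nonneg h) fun a => ?_
        calc ‖h (s16iA A B a)‖ ≤ ‖h‖ * ‖s16iA A B a‖ := le_opNorm h _
        _ = ‖h‖ * ‖a‖ := by rw [s16_norm_iA]
      have heB : ‖s16eB A B h‖ ≤ ‖h‖ := by
        refine opNorm_le_bound _ (norm_nonneg h) fun b => ?_
        calc ‖h (s16iB A B b)‖ ≤ ‖h‖ * ‖s16iB A B b‖ := le_opNorm h _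
        _ = ‖h‖ * ‖b‖ := by rw [s16_norm_iB]
      calc ‖F h‖ ≤ ‖Φ (s16eA A B h)‖ + ‖Ψ (s16eB A B h)‖ := h1 ▸ norm_add_le _ _
      _ ≤ ‖Φ‖ * ‖s16eA A B h‖ + ‖Ψ‖ * ‖s16eB A B h‖ :=
          add_le_add (le_opNorm Φ _) (le_opNorm Ψ _)
      _ ≤ ‖Φ‖ * ‖h‖ + ‖Ψ‖ * ‖h‖ := by gcongr
      _ = (‖Φ‖ + ‖Ψ‖) * ‖h‖ := by ring
    · refine le_of_forall_pos_le_add fun ε hε => ?_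
      obtain ⟨f, hf1, hf2⟩ := s16_exists_near Φ (half_pos hε)
      obtain ⟨g, hg1, hg2⟩ := s16_exists_near Ψ (half_pos hε)
      obtain ⟨α, hα1, hα2⟩ := s16_phase (Φ f)
      obtain ⟨β, hβ1, hβ2⟩ := s16_phase (Ψ g)
      set h : WithLp 1 (A × B) →L[ℂ] ℂ := s16dA A B (α • f) + s16dB A B (β • g) with hh
      have hn : ‖h‖ ≤ 1 := by
        refine opNorm_le_bound _ zero_le_one fun x => ?_
        rw [one_mul]
        have hx : h x = α • f (s16piA A B x) + β • g (s16piB A B x) := rfl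
        rw [hx]
        calc ‖α • f (s16piA A B x) + β • g (s16piB A B x)‖
            ≤ ‖α • f (s16piA A B x)‖ + ‖β • g (s16piB A B x)‖ := norm_add_le _ _
        _ = ‖f (s16piA A B x)‖ + ‖g (s16piB A B x)‖ := by
            rw [norm_smul, norm_smul, hα1, hβ1, one_mul, one_mul]
        _ ≤ ‖f‖ * ‖s16piA A B x‖ + ‖g‖ * ‖s16piB A B x‖ :=
            add_le_add (le_opNorm f _) (le_opNorm g _)
        _ ≤ 1 * ‖s16piA A B x‖ + 1 * ‖s16piB A B x‖ := by
            gcongr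
        _ = ‖x‖ := by rw [one_mul, one_mul, s16_norm_x]
      have hFh : F h = ((‖Φ f‖ + ‖Ψ g‖ : ℝ) : ℂ) := by
        have h2 : F h = Φ (α • f) + Ψ (β • g) := by rw [hh, map_add]; rfl
        rw [h2, map_smul, map_smul, smul_eq_mul, smul_eq_mul, hα2, hβ2]
        push_cast; ring
      have hnorm : ‖F h‖ = ‖Φ f‖ + ‖Ψ g‖ := by
        rw [hFh, Complex.norm_real, Real.norm_of_nonneg (by positivity)]
      have hle : ‖F h‖ ≤ ‖F‖ :=
        le_trans (le_opNorm F h) (mul_le_of_le_one_right (norm_nonneg F) hn)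
      linarith
  · -- multiplicativity
    intro F G
    have hPQ : ∀ x y : WithLp 1 (A × B), mAB x y = (WithLp.equiv 1 (A × B)).symm
        (M.bmul (WithLp.equiv 1 (A × B) x) (WithLp.equiv 1 (A × B) y)) := fun x y => by
      have := hm (WithLp.equiv 1 (A × B) x) (WithLp.equiv 1 (A × B) y)
      simpa using this
    have hA : ∀ x y : WithLp 1 (A × B),
        s16piA A B (mAB x y) = s16piA A B x * s16piA A B y := fun x y => by
      rw [hPQ x y]; rfl
    have hB : ∀ x y : WithLp 1 (A × B), s16piB A B (mAB x y) =
        M.l (s16piA A B x) (s16piB A B y) + M.r (s16piB A B x) (s16piA A B y)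
          + s16piB A B x * s16piB A B y := fun x y => by
      rw [hPQ x y]; rfl
    refine Prod.ext ?_ ?_
    · show (arens mAB F G).comp (s16dA A B) =
        arens (ContinuousLinearMap.mul ℂ A) (F.comp (s16dA A B)) (G.comp (s16dA A B))
      ext f
      show F (adjB (adjB mAB) G (s16dA A B f)) =
        F (s16dA A B (adjB (adjB (ContinuousLinearMap.mul ℂ A)) (G.comp (s16dA A B)) f))
      congr 1
      ext x
      show G (adjB mAB (s16dA A B f) x) =
        G (s16dA A B (adjB (ContinuousLinearMap.mul ℂ A) f (s16piA A B x)))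
      congr 1
      ext y
      show f (s16piA A B (mAB x y)) = f (s16piA A B x * s16piA A B y)
      rw [hA]
    · show (arens mAB F G).comp (s16dB A B) =
        arens M.l (F.comp (s16dA A B)) (G.comp (s16dB A B)) +
          arens M.r (F.comp (s16dB A B)) (G.comp (s16dA A B)) +
          arens (ContinuousLinearMap.mul ℂ B) (F.comp (s16dB A B)) (G.comp (s16dB A B))
      ext g
      rw [ContinuousLinearMap.add_apply, ContinuousLinearMap.add_apply]
      show F (adjB (adjB mAB) G (s16dB A B g)) =
        F (s16dA A B (adjB (adjB M.l) (G.comp (s16dB A B)) g)) +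
        F (s16dB A B (adjB (adjB M.r) (G.comp (s16dA A B)) g)) +
        F (s16dB A B (adjB (adjB (ContinuousLinearMap.mul ℂ B)) (G.comp (s16dB A B)) g))
      rw [← map_add, ← map_add]
      congr 1
      ext x
      rw [ContinuousLinearMap.add_apply, ContinuousLinearMap.add_apply]
      show G (adjB mAB (s16dB A B g) x) =
        G (s16dB A B (adjB M.l g (s16piA A B x))) +
        G (s16dA A B (adjB M.r g (s16piB A B x))) +
        G (s16dB A B (adjB (ContinuousLinearMap.mul ℂ B) g (s16piB A B x)))
      rw [← map_add, ← map_add]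
      congr 1
      ext y
      rw [ContinuousLinearMap.add_apply, ContinuousLinearMap.add_apply]
      show g (s16piB A B (mAB x y)) =
        g (M.l (s16piA A B x) (s16piB A B y)) +
        g (M.r (s16piB A B x) (s16piA A B y)) +
        g (s16piB A B x * s16piB A B y)
      rw [hB, map_add, map_add]
end

section
/- If B is Arens regular, then the first topological center of (A⋈B)** satisfies Z¹((A⋈B)**) = (Z¹(A**) ∩ Z¹_B(A**)) × Z¹_A(B**), where Z¹_A(B**)={b**∈B**: a**↦b**∘a** is weak*-weak* continuous} and Z¹_B(A**)={a**∈A**: b**↦a**∘b** is weak*-weak* continuous}. -/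
set_option synthInstance.maxHeartbeats 2000000
set_option maxSynthPendingDepth 4
set_option maxHeartbeats 2000000

open ContinuousLinearMap

lemma wcont_iff {W Z : Type*} (topW : TopologicalSpace W) [NormedAddCommGroup Z]
    [NormedSpace ℂ Z] (f : W → ((Z →L[ℂ] ℂ) →L[ℂ] ℂ)) :
    @Continuous _ _ topW (wstarTop Z) f ↔
      ∀ φ : Z →L[ℂ] ℂ, @Continuous _ _ topW _ (fun w => f w φ) := by
  rw [wstarTop, continuous_induced_rng]
  exact continuous_pi_iff

/-- if `B` is Arens regular, the first topological centre of
`(A ⋈ B)** ≅ A** ⋈ B**` is `(Z¹(A**) ∩ Z¹_B(A**)) × Z¹_A(B**)`, where membership of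
each centre means weak*-weak* continuity of the corresponding left product/action map
on the biduals (equipped with their first Arens products and Arens-extended actions). -/
theorem stmt17 {A B : Type*} [NonUnitalNormedRing A] [NormedSpace ℂ A] [CompleteSpace A]
    [IsScalarTower ℂ A A] [SMulCommClass ℂ A A]
    [NonUnitalNormedRing B] [NormedSpace ℂ B] [CompleteSpace B]
    [IsScalarTower ℂ B B] [SMulCommClass ℂ B B] (M : AlgBimod A B)
    (hreg : ∀ X : (B →L[ℂ] ℂ) →L[ℂ] ℂ,
      @Continuous _ _ (wstarTop B) (wstarTop B)
        (fun Y => arens (ContinuousLinearMap.mul ℂ B) X Y)) :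
    {P : ((A →L[ℂ] ℂ) →L[ℂ] ℂ) × ((B →L[ℂ] ℂ) →L[ℂ] ℂ) |
        @Continuous _ _ (@instTopologicalSpaceProd _ _ (wstarTop A) (wstarTop B))
          (@instTopologicalSpaceProd _ _ (wstarTop A) (wstarTop B))
          (fun Q => (arens (ContinuousLinearMap.mul ℂ A) P.1 Q.1,
            arens M.l P.1 Q.2 + arens M.r P.2 Q.1 +
              arens (ContinuousLinearMap.mul ℂ B) P.2 Q.2))} =
      {P : ((A →L[ℂ] ℂ) →L[ℂ] ℂ) × ((B →L[ℂ] ℂ) →L[ℂ] ℂ) |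
        (@Continuous _ _ (wstarTop A) (wstarTop A)
            (fun G => arens (ContinuousLinearMap.mul ℂ A) P.1 G) ∧
          @Continuous _ _ (wstarTop B) (wstarTop B) (fun X => arens M.l P.1 X)) ∧
        @Continuous _ _ (wstarTop A) (wstarTop B) (fun F => arens M.r P.2 F)} := by
  ext P
  simp only [Set.mem_setOf_eq]
  letI tA := wstarTop A
  letI tB := wstarTop B
  letI tP : TopologicalSpace (((A →L[ℂ] ℂ) →L[ℂ] ℂ) × ((B →L[ℂ] ℂ) →L[ℂ] ℂ)) :=
    @instTopologicalSpaceProd _ _ tA tB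
  have hregφ : ∀ (X : (B →L[ℂ] ℂ) →L[ℂ] ℂ) (φ : B →L[ℂ] ℂ),
      @Continuous _ _ tB _ (fun Y => arens (ContinuousLinearMap.mul ℂ B) X Y φ) :=
    fun X => (wcont_iff tB _).mp (hreg X)
  have hev : ∀ φ : B →L[ℂ] ℂ, @Continuous _ _ tB _ (fun Y : (B →L[ℂ] ℂ) →L[ℂ] ℂ => Y φ) := by
    intro φ
    have : @Continuous _ _ tB _
        (fun Y : (B →L[ℂ] ℂ) →L[ℂ] ℂ => (fun f => Y f : (B →L[ℂ] ℂ) → ℂ)) :=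
      continuous_induced_dom
    exact (continuous_pi_iff.mp this) φ
  have hevA : ∀ φ : A →L[ℂ] ℂ, @Continuous _ _ tA _ (fun Y : (A →L[ℂ] ℂ) →L[ℂ] ℂ => Y φ) := by
    intro φ
    have : @Continuous _ _ tA _
        (fun Y : (A →L[ℂ] ℂ) →L[ℂ] ℂ => (fun f => Y f : (A →L[ℂ] ℂ) → ℂ)) :=
      continuous_induced_dom
    exact (continuous_pi_iff.mp this) φ
  -- inclusions of factors are continuous
  have hinA : @Continuous _ _ tA tP (fun G : (A →L[ℂ] ℂ) →L[ℂ] ℂ => (G, (0 : (B →L[ℂ] ℂ) →L[ℂ] ℂ))) :=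
    Continuous.prodMk continuous_id continuous_const
  have hinB : @Continuous _ _ tB tP (fun X : (B →L[ℂ] ℂ) →L[ℂ] ℂ => ((0 : (A →L[ℂ] ℂ) →L[ℂ] ℂ), X)) :=
    Continuous.prodMk continuous_const continuous_id
  constructor
  · intro h
    have h1 : @Continuous _ _ tP tA
        (fun Q : ((A →L[ℂ] ℂ) →L[ℂ] ℂ) × ((B →L[ℂ] ℂ) →L[ℂ] ℂ) =>
          arens (ContinuousLinearMap.mul ℂ A) P.1 Q.1) :=
      continuous_fst.comp h
    have h2 : @Continuous _ _ tP tB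
        (fun Q : ((A →L[ℂ] ℂ) →L[ℂ] ℂ) × ((B →L[ℂ] ℂ) →L[ℂ] ℂ) =>
          arens M.l P.1 Q.2 + arens M.r P.2 Q.1 +
            arens (ContinuousLinearMap.mul ℂ B) P.2 Q.2) :=
      continuous_snd.comp h
    refine ⟨⟨?_, ?_⟩, ?_⟩
    · have := h1.comp hinA
      simpa [Function.comp_def] using this
    · -- restrict h2 to (0, X)
      have h2' := h2.comp hinB
      simp only [Function.comp_def, map_zero, zero_add, add_zero] at h2'
      -- h2' : Continuous fun X => arens M.l P.1 X + arens mulB P.2 X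
      rw [wcont_iff tB] at h2' ⊢
      intro φ
      have := (h2' φ).sub (hregφ P.2 φ)
      convert this using 1
      funext w
      simp
    · have h2' := h2.comp hinA
      simp only [Function.comp_def, map_zero, zero_add, add_zero] at h2'
      simpa using h2'
  · rintro ⟨⟨hA, hl⟩, hr⟩
    have hfst : @Continuous _ _ tP tA
        (fun Q : ((A →L[ℂ] ℂ) →L[ℂ] ℂ) × ((B →L[ℂ] ℂ) →L[ℂ] ℂ) => Q.1) :=
      continuous_fst
    have hsnd : @Continuous _ _ tP tB
        (fun Q : ((A →L[ℂ] ℂ) →L[ℂ] ℂ) × ((B →L[ℂ] ℂ) →L[ℂ] ℂ) => Q.2) :=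
      continuous_snd
    refine Continuous.prodMk (hA.comp hfst) ?_
    rw [wcont_iff tP]
    intro φ
    have c1 : @Continuous _ _ tP _ (fun Q : ((A →L[ℂ] ℂ) →L[ℂ] ℂ) × ((B →L[ℂ] ℂ) →L[ℂ] ℂ) =>
        arens M.l P.1 Q.2 φ) := ((wcont_iff tP _).mp (hl.comp hsnd)) φ
    have c2 : @Continuous _ _ tP _ (fun Q : ((A →L[ℂ] ℂ) →L[ℂ] ℂ) × ((B →L[ℂ] ℂ) →L[ℂ] ℂ) =>
        arens M.r P.2 Q.1 φ) := ((wcont_iff tP _).mp (hr.comp hfst)) φ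
    have c3 : @Continuous _ _ tP _ (fun Q : ((A →L[ℂ] ℂ) →L[ℂ] ℂ) × ((B →L[ℂ] ℂ) →L[ℂ] ℂ) =>
        arens (ContinuousLinearMap.mul ℂ B) P.2 Q.2 φ) :=
      ((wcont_iff tP _).mp ((hreg P.2).comp hsnd)) φ
    convert (c1.add c2).add c3 using 1
    funext w
    simp
end

section
/- If B is Arens regular and A⋈B is Arens regular, then A is Arens regular. -/
set_option synthInstance.maxHeartbeats 2000000
set_option maxSynthPendingDepth 4
set_option maxHeartbeats 2000000

open ContinuousLinearMap

section ArensAux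

open ContinuousLinearMap

variable {X X' : Type*} [NormedAddCommGroup X] [NormedSpace ℂ X]
    [NormedAddCommGroup X'] [NormedSpace ℂ X']

/-- The dual (transpose) of a continuous linear map. -/
noncomputable def dmCLM (T : X →L[ℂ] X') : (X' →L[ℂ] ℂ) →L[ℂ] (X →L[ℂ] ℂ) :=
  (compL ℂ X X' ℂ).flip T

/-- The bidual map of a continuous linear map. -/
noncomputable def bidCLM (T : X →L[ℂ] X') :
    ((X →L[ℂ] ℂ) →L[ℂ] ℂ) →L[ℂ] ((X' →L[ℂ] ℂ) →L[ℂ] ℂ) :=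
  dmCLM (dmCLM T)

lemma dmCLM_apply (T : X →L[ℂ] X') (f : X' →L[ℂ] ℂ) (x : X) : dmCLM T f x = f (T x) := rfl

lemma bidCLM_apply (T : X →L[ℂ] X') (F : (X →L[ℂ] ℂ) →L[ℂ] ℂ) (f : X' →L[ℂ] ℂ) :
    bidCLM T F f = F (dmCLM T f) := rfl

/-- Evaluation at a fixed functional is weak*-continuous on the bidual. -/
lemma eval_wcont (f : X →L[ℂ] ℂ) :
    @Continuous _ _ (wstarTop X) _ (fun F : (X →L[ℂ] ℂ) →L[ℂ] ℂ => F f) := by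
  have h : @Continuous _ _ (wstarTop X) _
      (fun F : (X →L[ℂ] ℂ) →L[ℂ] ℂ => (fun g => F g : (X →L[ℂ] ℂ) → ℂ)) :=
    continuous_induced_dom
  exact @Continuous.comp _ _ _ (wstarTop X) _ _ _ _ (continuous_apply f) h

/-- A map between biduals is weak*-weak* continuous as soon as all its compositions
with evaluations are weak*-continuous. -/
lemma wcont_of (Φ : ((X →L[ℂ] ℂ) →L[ℂ] ℂ) → ((X' →L[ℂ] ℂ) →L[ℂ] ℂ))
    (h : ∀ f' : X' →L[ℂ] ℂ, @Continuous _ _ (wstarTop X) _ (fun F => Φ F f')) :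
    @Continuous _ _ (wstarTop X) (wstarTop X') Φ := by
  letI : TopologicalSpace ((X →L[ℂ] ℂ) →L[ℂ] ℂ) := wstarTop X
  exact continuous_induced_rng.2 (continuous_pi h)

/-- The bidual map is weak*-weak* continuous. -/
lemma bid_wcont (T : X →L[ℂ] X') :
    @Continuous _ _ (wstarTop X) (wstarTop X') (bidCLM T) :=
  wcont_of _ fun f' => eval_wcont (dmCLM T f')

/-- Naturality of the first Arens extension with respect to a continuous
multiplicative linear map. -/
lemma arens_nat (T : X →L[ℂ] X') (m : X →L[ℂ] X →L[ℂ] X) (m' : X' →L[ℂ] X' →L[ℂ] X')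
    (hT : ∀ x y, m' (T x) (T y) = T (m x y))
    (F G : (X →L[ℂ] ℂ) →L[ℂ] ℂ) (f' : X' →L[ℂ] ℂ) :
    arens m' (bidCLM T F) (bidCLM T G) f' = bidCLM T (arens m F G) f' := by
  show F (dmCLM T (adjB (adjB m') (bidCLM T G) f')) = F (adjB (adjB m) G (dmCLM T f'))
  congr 1
  ext x
  show G (dmCLM T (adjB m' f' (T x))) = G (adjB m (dmCLM T f') x)
  congr 1
  ext y
  show f' (m' (T x) (T y)) = f' (T (m x y))
  rw [hT]

end ArensAux

/-- if `B` is Arens regular and `A ⋈ B` is Arens regular, then `A` is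
Arens regular.  Arens regularity of a Banach algebra `C` means that every element of
`C**` lies in the first topological centre, i.e. for every `F ∈ C**` the map
`G ↦ F □ G` (first Arens product) is weak*-weak* continuous. -/
theorem stmt18 {A B : Type*} [NonUnitalNormedRing A] [NormedSpace ℂ A] [CompleteSpace A]
    [IsScalarTower ℂ A A] [SMulCommClass ℂ A A]
    [NonUnitalNormedRing B] [NormedSpace ℂ B] [CompleteSpace B]
    [IsScalarTower ℂ B B] [SMulCommClass ℂ B B] (M : AlgBimod A B)
    (mAB : WithLp 1 (A × B) →L[ℂ] WithLp 1 (A × B) →L[ℂ] WithLp 1 (A × B))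
    (hm : ∀ p q : A × B,
      mAB ((WithLp.equiv 1 (A × B)).symm p) ((WithLp.equiv 1 (A × B)).symm q) =
        (WithLp.equiv 1 (A × B)).symm (M.bmul p q))
    (hregB : ∀ X : (B →L[ℂ] ℂ) →L[ℂ] ℂ,
      @Continuous _ _ (wstarTop B) (wstarTop B)
        (fun Y => arens (ContinuousLinearMap.mul ℂ B) X Y))
    (hregAB : ∀ F : (WithLp 1 (A × B) →L[ℂ] ℂ) →L[ℂ] ℂ,
      @Continuous _ _ (wstarTop (WithLp 1 (A × B))) (wstarTop (WithLp 1 (A × B)))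
        (fun G => arens mAB F G)) :
    ∀ F : (A →L[ℂ] ℂ) →L[ℂ] ℂ,
      @Continuous _ _ (wstarTop A) (wstarTop A)
        (fun G => arens (ContinuousLinearMap.mul ℂ A) F G) := by
  intro F
  classical
  set W := WithLp 1 (A × B)
  -- the embedding and the projection
  let e := WithLp.prodContinuousLinearEquiv 1 ℂ A B
  let ι : A →L[ℂ] W := (e.symm : (A × B) →L[ℂ] W).comp (ContinuousLinearMap.inl ℂ A B)
  let π : W →L[ℂ] A := (ContinuousLinearMap.fst ℂ A B).comp (e : W →L[ℂ] (A × B))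
  -- π is multiplicative
  have hπ : ∀ p q : W, (ContinuousLinearMap.mul ℂ A) (π p) (π q) = π (mAB p q) := by
    intro p q
    have h := hm (e p) (e q)
    have hp : (WithLp.equiv 1 (A × B)).symm (e p) = p := rfl
    have hq : (WithLp.equiv 1 (A × B)).symm (e q) = q := rfl
    rw [hp, hq] at h
    have : π (mAB p q) = (M.bmul (e p) (e q)).1 := by
      rw [h]; rfl
    rw [this]
    rfl
  -- π ∘ ι = id, hence bidCLM π ∘ bidCLM ι = id
  have hπι : ∀ a : A, π (ι a) = a := fun a => rfl
  have hbid : ∀ H : (A →L[ℂ] ℂ) →L[ℂ] ℂ, bidCLM π (bidCLM ι H) = H := by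
    intro H
    ext f
    show H (dmCLM ι (dmCLM π f)) = H f
    have hd : dmCLM ι (dmCLM π f) = f := ContinuousLinearMap.ext fun a => rfl
    rw [hd]
  -- the key identity
  have key : ∀ G : (A →L[ℂ] ℂ) →L[ℂ] ℂ,
      arens (ContinuousLinearMap.mul ℂ A) F G
        = bidCLM π (arens mAB (bidCLM ι F) (bidCLM ι G)) := by
    intro G
    have h1 : arens (ContinuousLinearMap.mul ℂ A) (bidCLM π (bidCLM ι F))
        (bidCLM π (bidCLM ι G)) = bidCLM π (arens mAB (bidCLM ι F) (bidCLM ι G)) := by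
      ext f
      exact arens_nat π mAB (ContinuousLinearMap.mul ℂ A) hπ (bidCLM ι F) (bidCLM ι G) f
    rw [hbid F, hbid G] at h1
    exact h1
  have : (fun G => arens (ContinuousLinearMap.mul ℂ A) F G)
      = (bidCLM π) ∘ (fun G' => arens mAB (bidCLM ι F) G') ∘ (bidCLM ι) := by
    funext G
    exact key G
  rw [this]
  letI : TopologicalSpace ((A →L[ℂ] ℂ) →L[ℂ] ℂ) := wstarTop A
  letI : TopologicalSpace ((W →L[ℂ] ℂ) →L[ℂ] ℂ) := wstarTop W
  exact (bid_wcont π).comp ((hregAB (bidCLM ι F)).comp (bid_wcont ι))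
end

section
/- In the θ-Lau product A θ× B (actions a·b=b·a=θ(a)b for a character θ on A), Δ(A θ× B)={(φ,0): φ∈Δ(A)} ∪ {(θ,ψ): ψ∈Δ(B)}. -/
open ContinuousLinearMap

/-- characters of the θ-Lau product `A θ× B`, whose multiplication is
`(a₁,b₁)(a₂,b₂) = (a₁a₂, θ(a₁)b₂ + θ(a₂)b₁ + b₁b₂)` for a norm-one character `θ` of
`A`.  A pair `(φ,ψ)` acting by `(a,b) ↦ φ(a) + ψ(b)` is a character iff
`(φ,ψ) ∈ {(φ,0) : φ ∈ Δ(A)} ∪ {(θ,ψ) : ψ ∈ Δ(B)}`. -/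
theorem stmt19 {A B : Type*} [NonUnitalNormedRing A] [NormedSpace ℂ A] [CompleteSpace A]
    [NonUnitalNormedRing B] [NormedSpace ℂ B] [CompleteSpace B]
    [IsScalarTower ℂ B B] [SMulCommClass ℂ B B]
    (θ : A →L[ℂ] ℂ) (hθm : ∀ a₁ a₂ : A, θ (a₁ * a₂) = θ a₁ * θ a₂)
    (hθ0 : θ ≠ 0) (hθn : ‖θ‖ = 1)
    (φ : A →L[ℂ] ℂ) (ψ : B →L[ℂ] ℂ) :
    (¬(φ = 0 ∧ ψ = 0) ∧
        ∀ p q : A × B,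
          φ (p.1 * q.1) + ψ (θ p.1 • q.2 + θ q.1 • p.2 + p.2 * q.2) =
            (φ p.1 + ψ p.2) * (φ q.1 + ψ q.2)) ↔
      ((ψ = 0 ∧ φ ≠ 0 ∧ ∀ a₁ a₂ : A, φ (a₁ * a₂) = φ a₁ * φ a₂) ∨
        (φ = θ ∧ ψ ≠ 0 ∧ ∀ b₁ b₂ : B, ψ (b₁ * b₂) = ψ b₁ * ψ b₂)) := by

  constructor
  · rintro ⟨hne, hmul⟩
    have hφ : ∀ a₁ a₂ : A, φ (a₁ * a₂) = φ a₁ * φ a₂ := by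
      intro a₁ a₂
      have := hmul (a₁, 0) (a₂, 0)
      simpa using this
    have hψ : ∀ b₁ b₂ : B, ψ (b₁ * b₂) = ψ b₁ * ψ b₂ := by
      intro b₁ b₂
      have := hmul (0, b₁) (0, b₂)
      simpa using this
    have key : ∀ (a : A) (b : B), (θ a - φ a) * ψ b = 0 := by
      intro a b
      have := hmul (0, b) (a, 0)
      simp [hφ] at this
      linear_combination this
    by_cases hψ0 : ψ = 0
    · left
      refine ⟨hψ0, ?_, hφ⟩
      intro h0
      exact hne ⟨h0, hψ0⟩
    · right
      refine ⟨?_, hψ0, hψ⟩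
      obtain ⟨b, hb⟩ : ∃ b, ψ b ≠ 0 := by
        by_contra h
        push_neg at h
        exact hψ0 (by ext b; simpa using h b)
      ext a
      have := key a b
      rcases mul_eq_zero.1 this with h | h
      · exact (sub_eq_zero.1 h).symm
      · exact absurd h hb
  · rintro (⟨hψ0, hφ0, hφ⟩ | ⟨hφθ, hψ0, hψ⟩)
    · subst hψ0
      refine ⟨fun h => hφ0 h.1, ?_⟩
      intro p q
      simp [hφ]
    · subst hφθ
      refine ⟨fun h => hψ0 h.2, ?_⟩
      intro p q
      simp [hθm, hψ, map_add]
      ring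
end
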